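/- arXiv:1604.03861 — 3 statements merged into one kernel-verified Lean document; each statement's English description precedes it below -/
import Mathlib

section
/- Let T be a finite tree of order at least 2 different from the path P_2. Then γ_M(T) = ℓ(T) if and only if for every vertex u of T there exists a leaf at distance at most 2 from u. -/
open SimpleGraph

variable {V : Type*}

/-- `S` is a resolving set of `G`. -/
def isResolvingSet (G : SimpleGraph V) (S : Set V) : Prop :=
  ∀ x y : V, x ≠ y → ∃ u ∈ S, G.dist u x ≠ G.dist u y

/-- `S` is a dominating set of `G`. -/
def isDominatingSet (G : SimpleGraph V) (S : Set V) : Prop :=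
  ∀ x : V, x ∉ S → ∃ u ∈ S, G.Adj u x

/-- `S` is a metric-locating-dominating set of `G`. -/
def isMLDSet (G : SimpleGraph V) (S : Set V) : Prop :=
  isResolvingSet G S ∧ isDominatingSet G S

/-- `S` is a locating-dominating set of `G`. -/
def isLDSet (G : SimpleGraph V) (S : Set V) : Prop :=
  isDominatingSet G S ∧
    ∀ x ∉ S, ∀ y ∉ S, x ≠ y → G.neighborSet x ∩ S ≠ G.neighborSet y ∩ S

/-- vertices `u` and `v` doubly resolve the pair `{x, y}`. -/
def doublyResolves (G : SimpleGraph V) (u v x y : V) : Prop :=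
  (G.dist u x : ℤ) - (G.dist u y : ℤ) ≠ (G.dist v x : ℤ) - (G.dist v y : ℤ)

/-- the set `S` doubly resolves the pair `{x, y}`. -/
def setDoublyResolves (G : SimpleGraph V) (S : Set V) (x y : V) : Prop :=
  ∃ u ∈ S, ∃ v ∈ S, doublyResolves G u v x y

/-- `S` is a doubly resolving set of `G`. -/
def isDoublyResolvingSet (G : SimpleGraph V) (S : Set V) : Prop :=
  ∀ x y : V, x ≠ y → setDoublyResolves G S x y

/-- the metric dimension `dim G`. -/
noncomputable def metricDim (G : SimpleGraph V) : ℕ :=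
  sInf {n | ∃ S : Set V, isResolvingSet G S ∧ S.ncard = n}

/-- the domination number `γ(G)`. -/
noncomputable def domNum (G : SimpleGraph V) : ℕ :=
  sInf {n | ∃ S : Set V, isDominatingSet G S ∧ S.ncard = n}

/-- the metric-location-domination number `γ_M(G)`. -/
noncomputable def mldNum (G : SimpleGraph V) : ℕ :=
  sInf {n | ∃ S : Set V, isMLDSet G S ∧ S.ncard = n}

/-- the location-domination number `γ_L(G)`. -/
noncomputable def ldNum (G : SimpleGraph V) : ℕ :=
  sInf {n | ∃ S : Set V, isLDSet G S ∧ S.ncard = n}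

/-- the minimum cardinality `ψ(G)` of a doubly resolving set. -/
noncomputable def psiNum (G : SimpleGraph V) : ℕ :=
  sInf {n | ∃ S : Set V, isDoublyResolvingSet G S ∧ S.ncard = n}

/-- a leaf: a vertex of degree 1. -/
def isLeaf (G : SimpleGraph V) (x : V) : Prop := (G.neighborSet x).ncard = 1

/-- a support vertex: a vertex adjacent to some leaf. -/
def isSupport (G : SimpleGraph V) (u : V) : Prop := ∃ x, isLeaf G x ∧ G.Adj u x

/-- a strong support vertex: a vertex adjacent to at least two leaves. -/
def isStrongSupport (G : SimpleGraph V) (u : V) : Prop :=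
  2 ≤ {x | isLeaf G x ∧ G.Adj u x}.ncard

/-- `ℓ(G)`: the number of leaves. -/
noncomputable def numLeaves (G : SimpleGraph V) : ℕ := {x | isLeaf G x}.ncard

/-- `ℓ'(G)`: the number of leaves adjacent to a strong support vertex. -/
noncomputable def numStrongLeaves (G : SimpleGraph V) : ℕ :=
  {x | isLeaf G x ∧ ∃ u, isStrongSupport G u ∧ G.Adj u x}.ncard

/-- a major vertex: a vertex of degree at least 3. -/
def isMajor (G : SimpleGraph V) (u : V) : Prop := 3 ≤ (G.neighborSet u).ncard

/-- `x` is a terminal vertex of the major vertex `u`: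
`x` is a leaf and `u` is the major vertex closest to `x`. -/
def isTerminalOf (G : SimpleGraph V) (u x : V) : Prop :=
  isLeaf G x ∧ isMajor G u ∧ ∀ w, isMajor G w → w ≠ u → G.dist u x < G.dist w x

/-- the terminal degree `ter(u)` of `u`. -/
noncomputable def terDeg (G : SimpleGraph V) (u : V) : ℕ :=
  {x | isTerminalOf G u x}.ncard

/-- `G` is (isomorphic to) a path graph. -/
def isPathGraph (G : SimpleGraph V) : Prop :=
  ∃ n : ℕ, Nonempty (G ≃g SimpleGraph.pathGraph n)

/-!
For an MLD-set `S`, send a leaf to itself if it lies in `S` and to its support vertex otherwise.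
When no two leaves are adjacent this is injective: two leaves outside `S` with a common support
vertex are at equal distance from every other vertex, so `S` would not resolve them. Hence
`ℓ(T) ≤ |S|`, and a vertex at distance at least 3 from all leaves dominates a vertex of `S` outside
the image, so then `ℓ(T) < |S|`.

Conversely, if every vertex is within distance 2 of a leaf, the support vertices together with all
leaves but one at each support vertex dominate, and they have exactly `ℓ(T)` elements. They also
resolve: if `x ≠ y` had the same distances to all of them, `d(x,y)` would be even (trees are
bipartite), with midpoint `m`. No vertex of the set can lie beyond `m` on the side of `x`, while a
leaf on that side must be the omitted leaf at `m`, and must be `x`. The same holds for `y`.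
-/

namespace SimpleGraph

variable {G : SimpleGraph V}

theorem Connected.exists_adj_dist_add_one_eq (hc : G.Connected) {u v : V} (hne : u ≠ v) :
    ∃ w, G.Adj w v ∧ G.dist u w + 1 = G.dist u v := by
  obtain ⟨p, hp⟩ := hc.exists_walk_length_eq_dist v u
  have hnil : ¬ p.Nil := Walk.not_nil_of_ne hne.symm
  have hadj := p.adj_snd hnil
  refine ⟨p.snd, hadj.symm, ?_⟩
  have h₁ : G.dist p.snd u ≤ p.tail.length := dist_le p.tail
  have h₂ := p.length_tail_add_one hnil
  have h₃ : G.dist v u ≤ G.dist v p.snd + G.dist p.snd u := hc.dist_triangle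
  rw [dist_eq_one_iff_adj.mpr hadj] at h₃
  rw [dist_comm (u := u), dist_comm (u := u)]
  omega

theorem Connected.exists_dist_eq_of_le (hc : G.Connected) {x y : V} {i : ℕ}
    (hi : i ≤ G.dist x y) : ∃ m, G.dist x m = i ∧ G.dist m y = G.dist x y - i := by
  induction i with
  | zero => exact ⟨x, dist_self, rfl⟩
  | succ i ih =>
    obtain ⟨m, hxm, hmy⟩ := ih (by omega)
    obtain ⟨m', hm'm, hym'⟩ := hc.exists_adj_dist_add_one_eq (u := y) (v := m)
      (by rintro rfl; rw [dist_self] at hmy; omega)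
    have h₁ : G.dist x m' ≤ G.dist x m + G.dist m m' := hc.dist_triangle
    have h₂ : G.dist x y ≤ G.dist x m' + G.dist m' y := hc.dist_triangle
    rw [dist_eq_one_iff_adj.mpr hm'm.symm] at h₁
    rw [dist_comm (u := y) (v := m'), dist_comm (u := y) (v := m)] at hym'
    exact ⟨m', by omega, by omega⟩

theorem IsTree.even_dist_add_dist_add_dist (ht : G.IsTree) (u x y : V) :
    Even (G.dist u x + G.dist x y + G.dist y u) := by
  obtain ⟨p, hp⟩ := ht.connected.exists_walk_length_eq_dist u x
  obtain ⟨q, hq⟩ := ht.connected.exists_walk_length_eq_dist x y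
  obtain ⟨r, hr⟩ := ht.connected.exists_walk_length_eq_dist y u
  have := two_colorable_iff_forall_loop_even.mp ht.colorable_two u (p.append (q.append r))
  simpa [hp, hq, hr, add_assoc] using this

theorem IsTree.eq_of_adj_of_dist_add_one_eq (ht : G.IsTree) {a w z₁ z₂ : V}
    (h₁ : G.Adj w z₁) (h₂ : G.Adj w z₂) (hd₁ : G.dist a z₁ + 1 = G.dist a w)
    (hd₂ : G.dist a z₂ + 1 = G.dist a w) : z₁ = z₂ := by
  obtain ⟨q₁, hq₁⟩ := ht.connected.exists_walk_length_eq_dist z₁ a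
  obtain ⟨q₂, hq₂⟩ := ht.connected.exists_walk_length_eq_dist z₂ a
  have hp₁ := (q₁.cons h₁).isPath_of_length_eq_dist
    (by rw [Walk.length_cons, hq₁, dist_comm, hd₁, dist_comm])
  have hp₂ := (q₂.cons h₂).isPath_of_length_eq_dist
    (by rw [Walk.length_cons, hq₂, dist_comm, hd₂, dist_comm])
  have := congrArg (fun p : G.Path w a => p.1.snd)
    ((ht.isAcyclic.subsingleton_path w a).elim ⟨_, hp₁⟩ ⟨_, hp₂⟩)
  simpa using this

/-- For an edge `ab` of a tree, `d(t,b) = d(t,a) + 1` says that `t` lies on the `a`-side of `ab`. -/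
theorem IsTree.dist_eq_dist_add_dist_of_adj (ht : G.IsTree) {a b t : V} (hab : G.Adj a b)
    (hta : G.dist t b = G.dist t a + 1) {x : V} (hxb : G.dist x a = G.dist x b + 1) :
    G.dist t x = G.dist t b + G.dist b x := by
  have hc := ht.connected
  have closer_stays : ∀ y z, G.Adj z y → G.dist b z + 1 = G.dist b y →
      G.dist y a = G.dist y b + 1 → G.dist z a = G.dist z b + 1 := by
    intro y z hzy hz hy
    rcases ht.dist_eq_dist_add_one_of_adj z hab with h | h
    · exact h
    · have : G.dist y a ≤ G.dist y z + G.dist z a := hc.dist_triangle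
      rw [dist_eq_one_iff_adj.mpr hzy.symm] at this
      rw [dist_comm (u := b), dist_comm (u := b)] at hz
      omega
  induction hn : G.dist b x using Nat.strong_induction_on generalizing x with
  | _ n ih =>
  rcases eq_or_ne x b with rfl | hne
  · rw [← hn, dist_self, add_zero]
  obtain ⟨x', hx'x, hx'⟩ := hc.exists_adj_dist_add_one_eq hne.symm
  have hx'side := closer_stays x x' hx'x hx' hxb
  have ih' := ih _ (by omega) hx'side rfl
  rcases ht.dist_eq_dist_add_one_of_adj t hx'x with h | h
  · exfalso
    obtain ⟨z, hzx', hzt, hzx⟩ : ∃ z, G.Adj x' z ∧ G.dist t z + 1 = G.dist t x' ∧ z ≠ x := by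
      rcases eq_or_ne x' b with rfl | hx'ne
      · exact ⟨a, hab.symm, hta.symm, by rintro rfl; simp at hxb⟩
      · obtain ⟨z, hzx', hz⟩ := hc.exists_adj_dist_add_one_eq hx'ne.symm
        have := ih _ (by omega) (closer_stays x' z hzx' hz hx'side) rfl
        exact ⟨z, hzx'.symm, by omega, by rintro rfl; omega⟩
    exact hzx (ht.eq_of_adj_of_dist_add_one_eq hzx' hx'x hzt h.symm)
  · omega

end SimpleGraph

section

variable {G : SimpleGraph V}

theorem isLeaf_iff {x : V} : isLeaf G x ↔ ∃ s, G.neighborSet x = {s} := Set.ncard_eq_one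

theorem eq_of_isLeaf_of_adj {x s₁ s₂ : V} (hx : isLeaf G x) (h₁ : G.Adj x s₁)
    (h₂ : G.Adj x s₂) : s₁ = s₂ := by
  obtain ⟨s, hs⟩ := isLeaf_iff.mp hx
  have h₁' : s₁ ∈ G.neighborSet x := h₁
  have h₂' : s₂ ∈ G.neighborSet x := h₂
  rw [hs] at h₁' h₂'
  exact h₁'.trans h₂'.symm

theorem isLeaf_of_forall_adj_eq {x s : V} (hxs : G.Adj x s) (h : ∀ z, G.Adj x z → z = s) :
    isLeaf G x :=
  isLeaf_iff.mpr ⟨s, Set.eq_singleton_iff_unique_mem.mpr ⟨hxs, h⟩⟩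

theorem isLeaf.exists_adj {x : V} (hx : isLeaf G x) : ∃ s, G.Adj x s := by
  obtain ⟨s, hs⟩ := isLeaf_iff.mp hx
  exact ⟨s, show s ∈ G.neighborSet x by rw [hs]; rfl⟩

theorem dist_eq_dist_add_one_of_isLeaf (hc : G.Connected) {x s t : V} (hx : isLeaf G x)
    (hxs : G.Adj x s) (htx : t ≠ x) : G.dist t x = G.dist t s + 1 := by
  obtain ⟨z, hzx, hz⟩ := hc.exists_adj_dist_add_one_eq htx
  rw [← hz, eq_of_isLeaf_of_adj hx hzx.symm hxs]

theorem SimpleGraph.IsTree.exists_isLeaf_dist_eq_add_one [Finite V] (ht : G.IsTree) {a b : V}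
    (hab : G.Adj a b) : ∃ w, isLeaf G w ∧ G.dist w a = G.dist w b + 1 := by
  have hc := ht.connected
  obtain ⟨w, hw, hmax⟩ : ∃ w, G.dist w a = G.dist w b + 1 ∧
      ∀ z, G.dist z a = G.dist z b + 1 → G.dist a z ≤ G.dist a w :=
    Set.exists_max_image {w | G.dist w a = G.dist w b + 1} (G.dist a) (Set.toFinite _)
      ⟨b, by simp [dist_comm, dist_eq_one_iff_adj.mpr hab]⟩
  have closer : ∀ z, G.Adj w z → G.dist a z + 1 = G.dist a w := by
    intro z hwz
    rcases ht.dist_eq_dist_add_one_of_adj a hwz with h | h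
    · exact h.symm
    · have hz : G.dist z a = G.dist z b + 1 := by
        rcases ht.dist_eq_dist_add_one_of_adj z hab with h' | h'
        · exact h'
        · have : G.dist z b ≤ G.dist z w + G.dist w b := hc.dist_triangle
          rw [dist_eq_one_iff_adj.mpr hwz.symm] at this
          rw [dist_comm (u := a), dist_comm (u := a)] at h
          omega
      have := hmax z hz
      omega
  have hwa : a ≠ w := by rintro rfl; simp at hw
  obtain ⟨s, hsw, hs⟩ := hc.exists_adj_dist_add_one_eq hwa
  exact ⟨w, isLeaf_of_forall_adj_eq hsw.symm fun z hwz =>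
    ht.eq_of_adj_of_dist_add_one_eq hwz hsw.symm (closer z hwz) hs, hw⟩

theorem nonempty_iso_pathGraph_two (hc : G.Connected) {x y : V} (hx : isLeaf G x)
    (hy : isLeaf G y) (hxy : G.Adj x y) : Nonempty (G ≃g pathGraph 2) := by
  have hV : ∀ z, z = x ∨ z = y := by
    intro z
    by_contra! h
    have := dist_eq_dist_add_one_of_isLeaf hc hx hxy h.1
    have := dist_eq_dist_add_one_of_isLeaf hc hy hxy.symm h.2
    omega
  have htop : G = ⊤ := by
    ext u v
    refine ⟨Adj.ne, fun huv => ?_⟩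
    rcases hV u with rfl | rfl <;> rcases hV v with rfl | rfl
    exacts [absurd rfl huv, hxy, hxy.symm, absurd rfl huv]
  classical
  let e : V ≃ Fin 2 :=
    { toFun := fun v => if v = x then 0 else 1
      invFun := ![x, y]
      left_inv := fun v => by rcases hV v with rfl | rfl <;> simp [hxy.ne.symm]
      right_inv := fun i => by fin_cases i <;> simp [hxy.ne.symm] }
  subst htop
  rw [pathGraph_two_eq_top]
  exact ⟨Iso.completeGraph e⟩

section LowerBound

variable {S : Set V}

theorem exists_injOn_leaves_of_isMLDSet (hc : G.Connected)
    (hnadj : ∀ x y, isLeaf G x → isLeaf G y → ¬ G.Adj x y) (hS : isMLDSet G S) :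
    ∃ f : V → V, Set.MapsTo f {x | isLeaf G x} S ∧ Set.InjOn f {x | isLeaf G x} ∧
      ∀ x, G.dist x (f x) ≤ 1 := by
  classical
  choose! g hgS hgx using hS.2
  refine ⟨fun x => if x ∈ S then x else g x, fun x _ => ?_, fun x₁ hx₁ x₂ hx₂ heq => ?_,
    fun x => ?_⟩
  · dsimp only
    split_ifs with h
    exacts [h, hgS x h]
  · by_contra hne
    dsimp only at heq
    split_ifs at heq with h₁ h₂ h₂
    · exact hne heq
    · exact hnadj x₂ x₁ hx₂ hx₁ (heq ▸ hgx x₂ h₂).symm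
    · exact hnadj x₁ x₂ hx₁ hx₂ (heq ▸ hgx x₁ h₁).symm
    · obtain ⟨u, huS, hu⟩ := hS.1 x₁ x₂ hne
      have hux₁ := dist_eq_dist_add_one_of_isLeaf hc hx₁ (hgx x₁ h₁).symm
        (ne_of_mem_of_not_mem huS h₁)
      have hux₂ := dist_eq_dist_add_one_of_isLeaf hc hx₂ (hgx x₂ h₂).symm
        (ne_of_mem_of_not_mem huS h₂)
      rw [heq] at hux₁
      omega
  · dsimp only
    split_ifs with h
    · simp
    · exact (dist_eq_one_iff_adj.mpr (hgx x h).symm).le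

theorem numLeaves_le_ncard [Finite V] (hc : G.Connected)
    (hnadj : ∀ x y, isLeaf G x → isLeaf G y → ¬ G.Adj x y) (hS : isMLDSet G S) :
    numLeaves G ≤ S.ncard := by
  obtain ⟨f, hmaps, hinj, -⟩ := exists_injOn_leaves_of_isMLDSet hc hnadj hS
  exact Set.ncard_le_ncard_of_injOn f hmaps hinj

theorem numLeaves_lt_ncard [Finite V] (hc : G.Connected)
    (hnadj : ∀ x y, isLeaf G x → isLeaf G y → ¬ G.Adj x y) (hS : isMLDSet G S) {u : V}
    (hu : ∀ x, isLeaf G x → 2 < G.dist u x) : numLeaves G < S.ncard := by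
  obtain ⟨f, hmaps, hinj, hf⟩ := exists_injOn_leaves_of_isMLDSet hc hnadj hS
  obtain ⟨s, hsS, hus⟩ : ∃ s ∈ S, G.dist u s ≤ 1 := by
    by_cases h : u ∈ S
    · exact ⟨u, h, by simp⟩
    · obtain ⟨s, hsS, hsu⟩ := hS.2 u h
      exact ⟨s, hsS, (dist_eq_one_iff_adj.mpr hsu.symm).le⟩
  have hs : s ∉ f '' {x | isLeaf G x} := by
    rintro ⟨x, hx, rfl⟩
    have : G.dist u x ≤ G.dist u (f x) + G.dist (f x) x := hc.dist_triangle
    rw [dist_comm (u := f x)] at this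
    have := hf x
    have := hu x hx
    omega
  calc numLeaves G = (f '' {x | isLeaf G x}).ncard := hinj.ncard_image.symm
    _ < S.ncard := Set.ncard_lt_ncard ⟨hmaps.image_subset, fun h => hs (h hsS)⟩

end LowerBound

open Classical in
noncomputable def pickLeaf (G : SimpleGraph V) (v : V) : V :=
  if h : isSupport G v then h.choose else v

theorem pickLeaf_spec {v : V} (h : isSupport G v) :
    isLeaf G (pickLeaf G v) ∧ G.Adj v (pickLeaf G v) := by
  rw [pickLeaf, dif_pos h]
  exact h.choose_spec

def supportsAndUnpickedLeaves (G : SimpleGraph V) : Set V :=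
  {v | isSupport G v} ∪ ({x | isLeaf G x} \ pickLeaf G '' {v | isSupport G v})

theorem ncard_supportsAndUnpickedLeaves [Finite V]
    (hnadj : ∀ x y, isLeaf G x → isLeaf G y → ¬ G.Adj x y) :
    (supportsAndUnpickedLeaves G).ncard = numLeaves G := by
  have hmaps : Set.MapsTo (pickLeaf G) {v | isSupport G v} {x | isLeaf G x} :=
    fun v hv => (pickLeaf_spec hv).1
  have hinj : Set.InjOn (pickLeaf G) {v | isSupport G v} := fun v hv v' hv' h =>
    eq_of_isLeaf_of_adj (pickLeaf_spec hv).1 (pickLeaf_spec hv).2.symm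
      (h ▸ (pickLeaf_spec hv').2.symm)
  have hdisj : Disjoint {v | isSupport G v}
      ({x | isLeaf G x} \ pickLeaf G '' {v | isSupport G v}) :=
    Set.disjoint_left.mpr fun v ⟨x, hx, hvx⟩ hv => hnadj v x hv.1 hx hvx
  have hle := Set.ncard_le_ncard_of_injOn _ hmaps hinj
  rw [supportsAndUnpickedLeaves, Set.ncard_union_eq hdisj, Set.ncard_sdiff hmaps.image_subset,
    hinj.ncard_image, numLeaves]
  omega

theorem isDominatingSet_supportsAndUnpickedLeaves (hc : G.Connected)
    (hnear : ∀ u, ∃ x, isLeaf G x ∧ G.dist u x ≤ 2) :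
    isDominatingSet G (supportsAndUnpickedLeaves G) := by
  intro u hu
  obtain ⟨x, hx, hux⟩ := hnear u
  rcases eq_or_ne u x with rfl | hne
  · obtain ⟨s, hus⟩ := hx.exists_adj
    exact ⟨s, Or.inl ⟨u, hx, hus.symm⟩, hus.symm⟩
  obtain ⟨w, hwx, hw⟩ := hc.exists_adj_dist_add_one_eq hne
  have hwS : w ∈ supportsAndUnpickedLeaves G := Or.inl ⟨x, hx, hwx⟩
  rcases eq_or_ne u w with rfl | huw
  · exact absurd hwS hu
  · exact ⟨w, hwS, (dist_eq_one_iff_adj.mp (by have := hc.pos_dist_of_ne huw; omega)).symm⟩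

section Resolving

variable [Finite V] {S : Set V}

theorem isLeaf_adj_of_forall_dist_eq (ht : G.IsTree) (hsupp : ∀ v, isSupport G v → v ∈ S)
    {x y m : V} {k : ℕ} (hk : 0 < k) (hxm : G.dist x m = k) (hym : G.dist y m = k)
    (hxy : G.dist x y = k + k) (hres : ∀ u ∈ S, G.dist u x = G.dist u y) :
    isLeaf G x ∧ G.Adj m x ∧ x ∉ S := by
  have hc := ht.connected
  obtain ⟨b, hbm, hxb⟩ := hc.exists_adj_dist_add_one_eq (u := x) (v := m)
    (by rintro rfl; rw [dist_self] at hxm; omega)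
  have hyb : G.dist y b = G.dist y m + 1 := by
    have h₁ : G.dist x y ≤ G.dist x b + G.dist b y := hc.dist_triangle
    have h₂ : G.dist y b ≤ G.dist y m + G.dist m b := hc.dist_triangle
    rw [dist_eq_one_iff_adj.mpr hbm.symm] at h₂
    rw [dist_comm (u := b)] at h₁
    omega
  -- Any vertex of `S` beyond the edge `mb` would be strictly closer to `x` than to `y`.
  have hbeyond : ∀ w, G.dist w m = G.dist w b + 1 → w ∉ S := by
    intro w hw hwS
    have h₁ := ht.dist_eq_dist_add_dist_of_adj hbm.symm hyb hw
    have h₂ : G.dist w x ≤ G.dist w b + G.dist b x := hc.dist_triangle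
    have := hres w hwS
    rw [dist_comm (u := y), dist_comm (u := b)] at h₁
    rw [dist_comm (u := b)] at h₂
    omega
  obtain ⟨w, hw, hwm⟩ := ht.exists_isLeaf_dist_eq_add_one hbm.symm
  obtain ⟨s, hws⟩ := hw.exists_adj
  have hsb : G.dist s b = G.dist s m + 1 := by
    rcases ht.dist_eq_dist_add_one_of_adj s hbm with h | h
    · exact h
    · exact absurd (hsupp s ⟨w, hw, hws.symm⟩) (hbeyond s h)
  have hsw := ht.dist_eq_dist_add_dist_of_adj hbm.symm hsb hwm
  rw [dist_eq_one_iff_adj.mpr hws.symm] at hsw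
  obtain rfl : b = w := hc.dist_eq_zero_iff.mp (by omega)
  obtain rfl : s = m := hc.dist_eq_zero_iff.mp (by omega)
  obtain rfl : x = b := by
    by_contra hne
    have := dist_eq_dist_add_one_of_isLeaf hc hw hws hne
    omega
  exact ⟨hw, hws.symm, hbeyond x hwm⟩

theorem isResolvingSet_of_forall_isSupport_mem (ht : G.IsTree)
    (hsupp : ∀ v, isSupport G v → v ∈ S)
    (hleaves : ∀ v x y, G.Adj v x → G.Adj v y → isLeaf G x → isLeaf G y → x ∉ S → y ∉ S →
      x = y) :
    isResolvingSet G S := by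
  have hc := ht.connected
  intro x y hne
  by_contra! hres
  obtain ⟨b, hby, -⟩ := hc.exists_adj_dist_add_one_eq hne
  obtain ⟨w, hw, -⟩ := ht.exists_isLeaf_dist_eq_add_one hby
  obtain ⟨s, hws⟩ := hw.exists_adj
  obtain ⟨k, hk⟩ : Even (G.dist x y) := by
    have := ht.even_dist_add_dist_add_dist s x y
    rw [hres s (hsupp s ⟨w, hw, hws.symm⟩), dist_comm (u := y)] at this
    rw [Nat.even_iff] at this ⊢
    omega
  have hk0 : 0 < k := by have := hc.pos_dist_of_ne hne; omega
  obtain ⟨m, hxm, hmy⟩ := hc.exists_dist_eq_of_le (x := x) (y := y) (i := k) (by omega)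
  have hym : G.dist y m = k := by rw [dist_comm]; omega
  obtain ⟨hx, hmx, hxS⟩ := isLeaf_adj_of_forall_dist_eq ht hsupp hk0 hxm hym hk hres
  obtain ⟨hy, hmy, hyS⟩ := isLeaf_adj_of_forall_dist_eq ht hsupp hk0 hym hxm
    (by rw [dist_comm]; exact hk) fun u hu => (hres u hu).symm
  exact hne (hleaves m x y hmx hmy hx hy hxS hyS)

theorem isResolvingSet_supportsAndUnpickedLeaves (ht : G.IsTree) :
    isResolvingSet G (supportsAndUnpickedLeaves G) := by
  have hpicked : ∀ v x, G.Adj v x → isLeaf G x → x ∉ supportsAndUnpickedLeaves G →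
      x = pickLeaf G v := by
    intro v x hvx hx hxS
    obtain ⟨v', hv', rfl⟩ : x ∈ pickLeaf G '' {v | isSupport G v} :=
      by_contra fun h => hxS (Or.inr ⟨hx, h⟩)
    rw [eq_of_isLeaf_of_adj hx (pickLeaf_spec hv').2.symm hvx.symm]
  refine isResolvingSet_of_forall_isSupport_mem ht (fun v hv => Or.inl hv) ?_
  intro v x y hvx hvy hx hy hxS hyS
  rw [hpicked v x hvx hx hxS, hpicked v y hvy hy hyS]

theorem isMLDSet_supportsAndUnpickedLeaves (ht : G.IsTree)
    (hnear : ∀ u, ∃ x, isLeaf G x ∧ G.dist u x ≤ 2) :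
    isMLDSet G (supportsAndUnpickedLeaves G) :=
  ⟨isResolvingSet_supportsAndUnpickedLeaves ht,
    isDominatingSet_supportsAndUnpickedLeaves ht.connected hnear⟩

end Resolving

theorem mldNum_le {S : Set V} (hS : isMLDSet G S) : mldNum G ≤ S.ncard :=
  Nat.sInf_le ⟨S, hS, rfl⟩

theorem isMLDSet_univ (hc : G.Preconnected) : isMLDSet G Set.univ :=
  ⟨fun x y hne => ⟨x, trivial, by rw [dist_self]; exact ((hc x y).pos_dist_of_ne hne).ne⟩,
    fun _ hx => absurd trivial hx⟩

theorem exists_isMLDSet_ncard_eq_mldNum (hc : G.Preconnected) :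
    ∃ S, isMLDSet G S ∧ S.ncard = mldNum G :=
  Nat.sInf_mem (s := {n | ∃ S : Set V, isMLDSet G S ∧ S.ncard = n})
    ⟨_, Set.univ, isMLDSet_univ hc, rfl⟩

end

theorem stmt7_general {V : Type*} [Fintype V] (G : SimpleGraph V)
    (htree : G.IsTree)
    (hnp2 : ¬ Nonempty (G ≃g SimpleGraph.pathGraph 2)) :
    mldNum G = numLeaves G ↔
      ∀ u : V, ∃ x : V, isLeaf G x ∧ G.dist u x ≤ 2 := by
  have hc := htree.connected
  have hnadj : ∀ x y, isLeaf G x → isLeaf G y → ¬ G.Adj x y :=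
    fun x y hx hy hxy => hnp2 (nonempty_iso_pathGraph_two hc hx hy hxy)
  obtain ⟨S, hS, hSmin⟩ := exists_isMLDSet_ncard_eq_mldNum hc.preconnected
  constructor
  · intro h u
    by_contra! hfar
    have := numLeaves_lt_ncard hc hnadj hS hfar
    omega
  · intro hnear
    refine le_antisymm ?_ (hSmin ▸ numLeaves_le_ncard hc hnadj hS)
    calc mldNum G
        ≤ (supportsAndUnpickedLeaves G).ncard :=
          mldNum_le (isMLDSet_supportsAndUnpickedLeaves htree hnear)
      _ = numLeaves G := ncard_supportsAndUnpickedLeaves hnadj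

theorem stmt7 {V : Type*} [Fintype V] (G : SimpleGraph V)
    (htree : G.IsTree) (hcard : 2 ≤ Fintype.card V)
    (hnp2 : ¬ Nonempty (G ≃g SimpleGraph.pathGraph 2)) :
    mldNum G = numLeaves G ↔
      ∀ u : V, ∃ x : V, isLeaf G x ∧ G.dist u x ≤ 2 :=
  stmt7_general G htree hnp2
end

section
/- There is no polynomial p with real coefficients such that γ_L(G) ≤ p(γ_M(G)) for every finite simple connected graph G of order at least 2; equivalently, for every polynomial p there exists a finite simple connected graph G with γ_L(G) > p(γ_M(G)). -/
open SimpleGraph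

variable {V : Type*}

/-!
The graph `SubsetGraph.graph k` has hubs `hub j` for `j < k`, a `root`, a `node A` adjacent to the
root for every `A ⊆ Fin k`, and for every `j ∈ A` a `link A j` adjacent to `node A` and `hub j`.
The `k + 1` vertices `root, hub j` dominate it and resolve it: `hub m` is at distance `2` or `4`
from `node A`, and at distance `1`, `3` or `5` from `link A j`, according as `m = j`, `m ∈ A` or
`m ∉ A`. On the other hand, a locating-dominating set `S` that misses both `node A` and every
`link A j` traces only `{root} ∩ S` on the neighbourhood of `node A`, so this happens for at most
one of the `2ᵏ` sets `A`. Hence `γ_M ≤ k + 1` while `γ_L ≥ 2ᵏ - 1`, and `2ᵏ` outgrows every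
polynomial in `k`.
-/

open Polynomial Filter Topology

namespace SimpleGraph

variable {V W : Type*} {G : SimpleGraph V} {H : SimpleGraph W} {u v w : V}

lemma dist_le_dist_add_one_of_adj (h : G.Adj v w) (u : V) : G.dist u w ≤ G.dist u v + 1 := by
  simpa [dist_eq_one_iff_adj.mpr h] using h.reachable.dist_triangle_right u

lemma Walk.le_add_length {f : V → ℕ} (hf : ∀ v w, G.Adj v w → f w ≤ f v + 1) :
    ∀ {u v : V} (p : G.Walk u v), f v ≤ f u + p.length
  | _, _, .nil => le_rfl
  | _, _, .cons h p => by
    have := hf _ _ h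
    have := p.le_add_length hf
    rw [Walk.length_cons]
    omega

lemma Reachable.le_add_dist {f : V → ℕ} (hf : ∀ v w, G.Adj v w → f w ≤ f v + 1)
    (h : G.Reachable u v) : f v ≤ f u + G.dist u v := by
  obtain ⟨p, hp⟩ := h.exists_walk_length_eq_dist
  exact hp ▸ p.le_add_length hf

lemma Hom.dist_map_le (f : G →g H) (h : G.Reachable u v) : H.dist (f u) (f v) ≤ G.dist u v := by
  obtain ⟨p, hp⟩ := h.exists_walk_length_eq_dist
  simpa [hp] using dist_le (p.map f)

lemma Iso.dist_eq (φ : G ≃g H) (u v : V) : H.dist (φ u) (φ v) = G.dist u v := by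
  by_cases h : G.Reachable u v
  · refine le_antisymm (Hom.dist_map_le φ.toHom h) ?_
    simpa using Hom.dist_map_le φ.symm.toHom (u := φ u) (v := φ v) (Iso.reachable_iff.mpr h)
  · rw [dist_eq_zero_of_not_reachable h, dist_eq_zero_of_not_reachable (mt Iso.reachable_iff.mp h)]

end SimpleGraph

open SimpleGraph

section IsoInvariance

variable {V W : Type*} {G : SimpleGraph V} {H : SimpleGraph W} {S : Set V}

lemma isResolvingSet.image (φ : G ≃g H) (hS : isResolvingSet G S) :
    isResolvingSet H (φ '' S) := by
  intro x y hxy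
  obtain ⟨u, hu, hd⟩ := hS (φ.symm x) (φ.symm y) (φ.symm.injective.ne hxy)
  refine ⟨φ u, Set.mem_image_of_mem φ hu, ?_⟩
  rwa [← φ.apply_symm_apply x, ← φ.apply_symm_apply y, φ.dist_eq, φ.dist_eq]

lemma isDominatingSet.image (φ : G ≃g H) (hS : isDominatingSet G S) :
    isDominatingSet H (φ '' S) := by
  intro x hx
  obtain ⟨u, hu, hadj⟩ := hS (φ.symm x) fun h => hx ⟨_, h, φ.apply_symm_apply x⟩
  exact ⟨φ u, Set.mem_image_of_mem φ hu, by simpa using φ.map_adj_iff.mpr hadj⟩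

lemma isMLDSet.image (φ : G ≃g H) (hS : isMLDSet G S) : isMLDSet H (φ '' S) :=
  ⟨hS.1.image φ, hS.2.image φ⟩

lemma isLDSet.image (φ : G ≃g H) (hS : isLDSet G S) : isLDSet H (φ '' S) := by
  refine ⟨hS.1.image φ, fun x hx y hy hxy => ?_⟩
  have hS' : ∀ z ∉ φ '' S, φ.symm z ∉ S := fun z hz h => hz ⟨_, h, φ.apply_symm_apply z⟩
  have hne := hS.2 _ (hS' x hx) _ (hS' y hy) (φ.symm.injective.ne hxy)
  rwa [← φ.apply_symm_apply x, ← φ.apply_symm_apply y, ← φ.image_neighborSet,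
    ← φ.image_neighborSet, ← Set.image_inter φ.injective, ← Set.image_inter φ.injective,
    Ne, Set.image_eq_image φ.injective]

lemma sInf_ncard_congr {P : Set V → Prop} {Q : Set W → Prop} (e : V ≃ W)
    (hPQ : ∀ S, P S → Q (e '' S)) (hQP : ∀ S, Q S → P (e.symm '' S)) :
    sInf {n | ∃ S, P S ∧ S.ncard = n} = sInf {n | ∃ S, Q S ∧ S.ncard = n} := by
  congr 1
  ext n
  constructor
  · rintro ⟨S, hS, rfl⟩
    exact ⟨e '' S, hPQ S hS, Set.ncard_image_of_injective S e.injective⟩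
  · rintro ⟨S, hS, rfl⟩
    exact ⟨e.symm '' S, hQP S hS, Set.ncard_image_of_injective S e.symm.injective⟩

lemma mldNum_eq_of_iso (φ : G ≃g H) : mldNum G = mldNum H :=
  sInf_ncard_congr φ.toEquiv (fun _ hS => hS.image φ) (fun _ hS => hS.image φ.symm)

lemma ldNum_eq_of_iso (φ : G ≃g H) : ldNum G = ldNum H :=
  sInf_ncard_congr φ.toEquiv (fun _ hS => hS.image φ) (fun _ hS => hS.image φ.symm)

end IsoInvariance

section Bounds

variable {V : Type*} {G : SimpleGraph V} {S : Set V}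

lemma mldNum_le_ncard (hS : isMLDSet G S) : mldNum G ≤ S.ncard :=
  Nat.sInf_le ⟨S, hS, rfl⟩

lemma isLDSet_univ (G : SimpleGraph V) : isLDSet G Set.univ :=
  ⟨fun _ hx => (hx trivial).elim, fun _ hx => (hx trivial).elim⟩

lemma le_ldNum {b : ℕ} (h : ∀ S, isLDSet G S → b ≤ S.ncard) : b ≤ ldNum G :=
  le_csInf ⟨_, Set.univ, isLDSet_univ G, rfl⟩ (by rintro _ ⟨S, hS, rfl⟩; exact h S hS)

end Bounds

namespace SubsetGraph

inductive Vertex (k : ℕ) : Type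
  | hub (j : Fin k)
  | root
  | node (A : Finset (Fin k))
  | link (A : Finset (Fin k)) (j : Fin k) (hj : j ∈ A)
  deriving DecidableEq, Fintype

open Vertex

variable {k : ℕ}

def Rel : Vertex k → Vertex k → Prop
  | link _ j _, hub j' => j = j'
  | link A _ _, node B => A = B
  | node _, root => True
  | _, _ => False

def graph (k : ℕ) : SimpleGraph (Vertex k) := SimpleGraph.fromRel Rel

lemma adj_link_hub (A : Finset (Fin k)) (j : Fin k) (hj : j ∈ A) :
    (graph k).Adj (link A j hj) (hub j) := by
  simp [graph, Rel]

lemma adj_link_node (A : Finset (Fin k)) (j : Fin k) (hj : j ∈ A) :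
    (graph k).Adj (link A j hj) (node A) := by
  simp [graph, Rel]

lemma adj_node_root (A : Finset (Fin k)) : (graph k).Adj (node A) root := by
  simp [graph, Rel]

lemma adj_node_iff {A : Finset (Fin k)} {v : Vertex k} :
    (graph k).Adj (node A) v ↔ v = root ∨ ∃ j hj, v = link A j hj := by
  cases v <;> simp [graph, Rel, eq_comm]
  rintro rfl
  assumption

lemma not_adj_hub_node (j : Fin k) (A : Finset (Fin k)) : ¬(graph k).Adj (hub j) (node A) := by
  simp [graph, Rel]

lemma adj_hub_link_iff {i j : Fin k} {A : Finset (Fin k)} {hj : j ∈ A} :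
    (graph k).Adj (hub i) (link A j hj) ↔ i = j := by
  simp [graph, Rel, eq_comm]

lemma reachable_root (v : Vertex k) : (graph k).Reachable root v := by
  have hnode (A) : (graph k).Reachable root (node A) := (adj_node_root A).symm.reachable
  have hlink (A j hj) : (graph k).Reachable root (link A j hj) :=
    (hnode A).trans (adj_link_node A j hj).symm.reachable
  cases v with
  | hub j => exact (hlink {j} j (Finset.mem_singleton_self j)).trans (adj_link_hub _ _ _).reachable
  | root => rfl
  | node A => exact hnode A
  | link A j hj => exact hlink A j hj

lemma connected : (graph k).Connected :=
  (connected_iff_exists_forall_reachable _).mpr ⟨root, reachable_root⟩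

lemma two_le_card : 2 ≤ Fintype.card (Vertex k) :=
  Fintype.one_lt_card_iff.mpr ⟨root, node ∅, nofun⟩

/-- This is `dist (hub m)`; changing by at most one along edges, it bounds that distance below. -/
def potential (m : Fin k) : Vertex k → ℕ
  | hub j => if j = m then 0 else 4
  | root => 3
  | node A => if m ∈ A then 2 else 4
  | link A j _ => if j = m then 1 else if m ∈ A then 3 else 5

lemma potential_le_add_one_of_adj (m : Fin k) :
    ∀ v w, (graph k).Adj v w → potential m w ≤ potential m v + 1 := by
  intro v w h
  rcases v with j | _ | A | ⟨A, j, hj⟩ <;> rcases w with j' | _ | B | ⟨B, j', hj'⟩ <;>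
    simp [graph, Rel] at h <;> simp only [potential] <;> split_ifs <;> grind

lemma potential_le_dist (m : Fin k) (v : Vertex k) : potential m v ≤ (graph k).dist (hub m) v := by
  simpa [potential] using
    ((reachable_root (hub m)).symm.trans (reachable_root v)).le_add_dist
      (potential_le_add_one_of_adj m)

lemma dist_hub_node_le {m : Fin k} {A : Finset (Fin k)} (hm : m ∈ A) :
    (graph k).dist (hub m) (node A) ≤ 2 := by
  have h1 : (graph k).dist (hub m) (link A m hm) = 1 :=
    dist_eq_one_iff_adj.mpr (adj_link_hub A m hm).symm
  have := dist_le_dist_add_one_of_adj (adj_link_node A m hm) (hub m)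
  omega

lemma dist_hub_link_le {m j : Fin k} {A : Finset (Fin k)} (hm : m ∈ A) (hj : j ∈ A) :
    (graph k).dist (hub m) (link A j hj) ≤ 3 := by
  have := dist_le_dist_add_one_of_adj (adj_link_node A j hj).symm (hub m)
  have := dist_hub_node_le hm
  omega

lemma dist_hub_node_lt {m : Fin k} {A B : Finset (Fin k)} (hA : m ∈ A) (hB : m ∉ B) :
    (graph k).dist (hub m) (node A) < (graph k).dist (hub m) (node B) := by
  have := potential_le_dist m (node B)
  have := dist_hub_node_le hA
  simp only [potential, if_neg hB] at *
  omega

lemma dist_hub_link_lt {m i j : Fin k} {A B : Finset (Fin k)} (hA : m ∈ A) (hB : m ∉ B)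
    (hi : i ∈ A) (hj : j ∈ B) :
    (graph k).dist (hub m) (link A i hi) < (graph k).dist (hub m) (link B j hj) := by
  have hjm : j ≠ m := by rintro rfl; exact hB hj
  have := potential_le_dist m (link B j hj)
  have := dist_hub_link_le hA hi
  simp only [potential, if_neg hB, if_neg hjm] at *
  omega

def mldSet (k : ℕ) : Set (Vertex k) := insert root (Set.range hub)

lemma exists_hub_dist_ne {v v' : Vertex k} (hv : v ∉ mldSet k) (hv' : v' ∉ mldSet k)
    (hne : v ≠ v') : ∃ m, (graph k).dist (hub m) v ≠ (graph k).dist (hub m) v' := by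
  have adj_ne {i} {v v' : Vertex k} (h : (graph k).Adj (hub i) v') (h' : ¬(graph k).Adj (hub i) v) :
      ∃ m, (graph k).dist (hub m) v ≠ (graph k).dist (hub m) v' :=
    ⟨i, by rwa [dist_eq_one_iff_adj.mpr h, Ne, dist_eq_one_iff_adj]⟩
  rcases v with _ | _ | A | ⟨A, i, hi⟩ <;> rcases v' with _ | _ | B | ⟨B, j, hj⟩ <;>
    simp [mldSet] at hv hv'
  · obtain ⟨m, hm⟩ := Finset.symmDiff_nonempty.mpr fun h : A = B => hne (by rw [h])
    rcases Finset.mem_symmDiff.mp hm with ⟨hA, hB⟩ | ⟨hB, hA⟩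
    · exact ⟨m, (dist_hub_node_lt hA hB).ne⟩
    · exact ⟨m, (dist_hub_node_lt hB hA).ne'⟩
  · exact adj_ne (adj_link_hub B j hj).symm (not_adj_hub_node j A)
  · obtain ⟨m, hm⟩ := adj_ne (adj_link_hub A i hi).symm (not_adj_hub_node i B)
    exact ⟨m, Ne.symm hm⟩
  · by_cases hij : i = j
    · subst hij
      obtain ⟨m, hm⟩ := Finset.symmDiff_nonempty.mpr fun h : A = B => hne (by subst h; rfl)
      rcases Finset.mem_symmDiff.mp hm with ⟨hA, hB⟩ | ⟨hB, hA⟩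
      · exact ⟨m, (dist_hub_link_lt hA hB hi hj).ne⟩
      · exact ⟨m, (dist_hub_link_lt hB hA hj hi).ne'⟩
    · exact adj_ne (adj_link_hub B j hj).symm (adj_hub_link_iff.not.mpr (Ne.symm hij))

lemma isMLDSet_mldSet : isMLDSet (graph k) (mldSet k) := by
  refine ⟨fun v v' hne => ?_, ?_⟩
  · by_cases hv : v ∈ mldSet k
    · exact ⟨v, hv, by rw [dist_self]; exact (connected.pos_dist_of_ne hne).ne⟩
    by_cases hv' : v' ∈ mldSet k
    · exact ⟨v', hv', by rw [dist_self]; exact (connected.pos_dist_of_ne hne.symm).ne'⟩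
    obtain ⟨m, hm⟩ := exists_hub_dist_ne hv hv' hne
    exact ⟨hub m, Set.mem_insert_of_mem _ ⟨m, rfl⟩, hm⟩
  · rintro (_ | _ | A | ⟨A, j, hj⟩) hv
    · exact (hv (Set.mem_insert_of_mem _ ⟨_, rfl⟩)).elim
    · exact (hv (Set.mem_insert _ _)).elim
    · exact ⟨root, Set.mem_insert _ _, (adj_node_root A).symm⟩
    · exact ⟨hub j, Set.mem_insert_of_mem _ ⟨j, rfl⟩, (adj_link_hub A j hj).symm⟩

lemma ncard_mldSet : (mldSet k).ncard ≤ k + 1 := by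
  have := Set.ncard_insert_le root (Set.range (hub : Fin k → Vertex k))
  rwa [Set.ncard_range_of_injective fun _ _ h => by cases h; rfl, Nat.card_eq_fintype_card,
    Fintype.card_fin] at this

lemma mldNum_graph_le : mldNum (graph k) ≤ k + 1 :=
  (mldNum_le_ncard isMLDSet_mldSet).trans ncard_mldSet

def owner : Vertex k → Finset (Fin k)
  | node A => A
  | link A _ _ => A
  | _ => ∅

lemma neighborSet_node_inter {S : Set (Vertex k)} {A : Finset (Fin k)} (hA : A ∉ owner '' S) :
    (graph k).neighborSet (node A) ∩ S = {root} ∩ S := by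
  ext v
  simp only [Set.mem_inter_iff, mem_neighborSet, adj_node_iff, Set.mem_singleton_iff]
  constructor
  · rintro ⟨rfl | ⟨j, hj, rfl⟩, hv⟩
    · exact ⟨rfl, hv⟩
    · exact (hA ⟨_, hv, rfl⟩).elim
  · rintro ⟨rfl, hv⟩
    exact ⟨.inl rfl, hv⟩

lemma two_pow_le_ncard_add_one {S : Set (Vertex k)} (hS : isLDSet (graph k) S) :
    2 ^ k ≤ S.ncard + 1 := by
  have hsub : (owner '' S)ᶜ.Subsingleton := by
    intro A hA B hB
    by_contra hne
    refine hS.2 (node A) (fun h => hA ⟨_, h, rfl⟩) (node B) (fun h => hB ⟨_, h, rfl⟩)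
      (fun h => hne (by cases h; rfl)) ?_
    rw [neighborSet_node_inter hA, neighborSet_node_inter hB]
  calc 2 ^ k = (Set.univ : Set (Finset (Fin k))).ncard := by simp
    _ ≤ (owner '' S).ncard + (owner '' S)ᶜ.ncard := by
      rw [← Set.union_compl_self (owner '' S)]
      exact Set.ncard_union_le _ _
    _ ≤ S.ncard + 1 :=
      add_le_add (Set.ncard_image_le (Set.toFinite S)) (Set.ncard_le_one_iff_subsingleton.mpr hsub)

lemma two_pow_le_ldNum_graph_add_one : 2 ^ k ≤ ldNum (graph k) + 1 := by
  have := le_ldNum (G := graph k) (b := 2 ^ k - 1) fun S hS => by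
    have := two_pow_le_ncard_add_one hS
    omega
  omega

end SubsetGraph

lemma eval_le_sum_abs_coeff_mul_pow (p : ℝ[X]) {t N : ℝ} (ht : 0 ≤ t) (htN : t ≤ N) :
    p.eval t ≤ ∑ i ∈ Finset.range (p.natDegree + 1), |p.coeff i| * N ^ i := by
  rw [eval_eq_sum_range]
  refine Finset.sum_le_sum fun i _ => ?_
  calc p.coeff i * t ^ i ≤ |p.coeff i| * t ^ i := by gcongr; exact le_abs_self _
    _ ≤ |p.coeff i| * N ^ i := by gcongr

lemma exists_forall_eval_lt_two_pow_sub_one (p : ℝ[X]) :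
    ∃ k : ℕ, ∀ t : ℕ, t ≤ k + 1 → p.eval (t : ℝ) < 2 ^ k - 1 := by
  set f : ℕ → ℝ := fun N => ∑ i ∈ Finset.range (p.natDegree + 1), |p.coeff i| * (N : ℝ) ^ i
  have hf : Tendsto (fun N => f N / 2 ^ N) atTop (𝓝 0) := by
    simp only [f, Finset.sum_div, mul_div_assoc]
    simpa using tendsto_finsetSum _ fun i _ =>
      (tendsto_pow_const_div_const_pow_of_one_lt i one_lt_two).const_mul |p.coeff i|
  obtain ⟨k, hk, hk1⟩ := ((hf.comp (tendsto_add_atTop_nat 1)).eventually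
    (gt_mem_nhds (by norm_num : (0 : ℝ) < 1 / 4)) |>.and (eventually_ge_atTop 1)).exists
  refine ⟨k, fun t ht => ?_⟩
  have h2k : (2 : ℝ) ≤ 2 ^ k := by simpa using pow_le_pow_right₀ one_le_two hk1
  have hfk : f (k + 1) < 2 ^ k / 2 := by
    rw [Function.comp_apply, div_lt_iff₀ (by positivity)] at hk
    rw [pow_succ] at hk
    linarith
  calc p.eval (t : ℝ) ≤ f (k + 1) :=
        eval_le_sum_abs_coeff_mul_pow p t.cast_nonneg (by exact_mod_cast ht)
    _ < 2 ^ k - 1 := by linarith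

theorem stmt13 (p : Polynomial ℝ) :
    ∃ (n : ℕ) (G : SimpleGraph (Fin n)), 2 ≤ n ∧ G.Connected ∧
      p.eval ((mldNum G : ℝ)) < (ldNum G : ℝ) := by
  obtain ⟨k, hk⟩ := exists_forall_eval_lt_two_pow_sub_one p
  let φ := Iso.comap (Fintype.equivFin (SubsetGraph.Vertex k)).symm (SubsetGraph.graph k)
  refine ⟨_, _, SubsetGraph.two_le_card, φ.connected_iff.mpr SubsetGraph.connected, ?_⟩
  rw [mldNum_eq_of_iso φ, ldNum_eq_of_iso φ]
  have hld : (2 : ℝ) ^ k ≤ ldNum (SubsetGraph.graph k) + 1 := by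
    exact_mod_cast SubsetGraph.two_pow_le_ldNum_graph_add_one
  linarith [hk _ SubsetGraph.mldNum_graph_le]
end

section
/- Let G be a finite simple connected graph of order at least 2 with girth at least 5, let S be an MLD-set of G, and let x ∈ S and y ∈ V(G) \ S be such that the pair {x,y} is not doubly resolved by S. Then N(y) = {x}, i.e., y is a vertex of degree 1 whose only neighbor is x. -/
open SimpleGraph

variable {V : Type*}

/-!
Since `S` does not doubly resolve `{x, y}` and `x ∈ S`, every `u ∈ S` satisfies
`d(u, y) = d(u, x) + d(x, y)`. Hence the only vertex of `S` adjacent to `y` is `x`, and `x` is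
adjacent to `y` because `S` dominates `y`. A second neighbour `z` of `y` lies outside `S` and is
dominated by some `w ∈ S`: either `w = x`, closing a triangle `x y z`, or `d(w, x) = 1` by the
identity above, closing a 4-cycle `x y z w`; both contradict girth at least 5.
-/

namespace SimpleGraph

variable {G : SimpleGraph V}

lemma girth_le_three_of_adj {a b c : V} (hab : G.Adj a b) (hbc : G.Adj b c) (hca : G.Adj c a) :
    G.girth ≤ 3 := by
  have hcycle : (Walk.cons hab (.cons hbc (.cons hca .nil))).IsCycle := by
    rw [Walk.cons_isCycle_iff, Walk.isPath_def]
    simp [hab.ne, hab.ne', hbc.ne, hca.ne, hca.ne']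
  exact girth_le_length hcycle

lemma girth_le_four_of_adj {a b c d : V} (hab : G.Adj a b) (hbc : G.Adj b c) (hcd : G.Adj c d)
    (hda : G.Adj d a) (hac : a ≠ c) (hbd : b ≠ d) : G.girth ≤ 4 := by
  have hcycle : (Walk.cons hab (.cons hbc (.cons hcd (.cons hda .nil)))).IsCycle := by
    rw [Walk.cons_isCycle_iff, Walk.isPath_def]
    simp [hab.ne, hab.ne', hbc.ne, hcd.ne, hda.ne, hda.ne', hbd, hac, hac.symm]
  exact girth_le_length hcycle

end SimpleGraph

section NotDoublyResolved

variable {G : SimpleGraph V} {S : Set V} {x y : V}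

lemma dist_eq_dist_add_dist_of_not_setDoublyResolves (hx : x ∈ S)
    (hnd : ¬ setDoublyResolves G S x y) {u : V} (hu : u ∈ S) :
    G.dist u y = G.dist u x + G.dist x y := by
  have h : (G.dist u x : ℤ) - G.dist u y = G.dist x x - G.dist x y := by
    by_contra hne
    exact hnd ⟨u, hu, x, hx, hne⟩
  rw [dist_self] at h
  omega

lemma eq_of_adj_of_not_setDoublyResolves (hconn : G.Connected) (hx : x ∈ S) (hxy : x ≠ y)
    (hnd : ¬ setDoublyResolves G S x y) {w : V} (hw : w ∈ S) (hwy : G.Adj w y) : w = x := by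
  have hdist := dist_eq_dist_add_dist_of_not_setDoublyResolves hx hnd hw
  rw [dist_eq_one_iff_adj.mpr hwy] at hdist
  have := hconn.pos_dist_of_ne hxy
  exact hconn.dist_eq_zero_iff.mp (by omega)

lemma adj_of_dist_le_two_of_not_setDoublyResolves (hconn : G.Connected) (hx : x ∈ S)
    (hnd : ¬ setDoublyResolves G S x y) (hxy : G.Adj x y) {w : V} (hw : w ∈ S) (hwx : w ≠ x)
    (hwy : G.dist w y ≤ 2) : G.Adj w x := by
  have hdist := dist_eq_dist_add_dist_of_not_setDoublyResolves hx hnd hw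
  rw [dist_eq_one_iff_adj.mpr hxy] at hdist
  have := hconn.pos_dist_of_ne hwx
  exact dist_eq_one_iff_adj.mp (by omega)

end NotDoublyResolved

theorem stmt17_general {V : Type*} (G : SimpleGraph V)
    (hconn : G.Connected) (hg : 5 ≤ G.girth)
    (S : Set V) (hS : isMLDSet G S) (x : V) (hx : x ∈ S)
    (y : V) (hy : y ∉ S) (hnd : ¬ setDoublyResolves G S x y) :
    G.neighborSet y = {x} := by
  obtain ⟨-, hdom⟩ := hS
  have hxy : x ≠ y := ne_of_mem_of_not_mem hx hy
  have hnbr {w : V} (hw : w ∈ S) (hwy : G.Adj w y) : w = x :=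
    eq_of_adj_of_not_setDoublyResolves hconn hx hxy hnd hw hwy
  have hxy_adj : G.Adj x y := by
    obtain ⟨u, hu, huy⟩ := hdom y hy
    exact hnbr hu huy ▸ huy
  ext z
  refine ⟨fun hyz => ?_, fun hzx => (Set.mem_singleton_iff.mp hzx) ▸ hxy_adj.symm⟩
  by_contra hzx
  have hzS : z ∉ S := fun hzS => hzx (hnbr hzS hyz.symm)
  obtain ⟨w, hw, hwz⟩ := hdom z hzS
  by_cases hwx : w = x
  · subst hwx
    have := girth_le_three_of_adj hxy_adj hyz hwz.symm
    omega
  · have hwy : G.dist w y ≤ 2 := by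
      simpa [dist_eq_one_iff_adj.mpr hwz, dist_eq_one_iff_adj.mpr hyz.symm]
        using hconn.dist_triangle (u := w) (v := z) (w := y)
    have := girth_le_four_of_adj hxy_adj hyz hwz.symm
      (adj_of_dist_le_two_of_not_setDoublyResolves hconn hx hnd hxy_adj hw hwx hwy)
      (fun h => hzx (Set.mem_singleton_iff.mpr h.symm)) (ne_of_mem_of_not_mem hw hy).symm
    omega

theorem stmt17 {V : Type*} [Fintype V] (G : SimpleGraph V)
    (hconn : G.Connected) (hcard : 2 ≤ Fintype.card V) (hg : 5 ≤ G.girth)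
    (S : Set V) (hS : isMLDSet G S) (x : V) (hx : x ∈ S)
    (y : V) (hy : y ∉ S) (hnd : ¬ setDoublyResolves G S x y) :
    G.neighborSet y = {x} :=
  stmt17_general G hconn hg S hS x hx y hy hnd
end
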